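/- Let Q be a finite alphabet, μ a probability distribution on Q, and q* ∈ Q with μ(q*) > 0. Let D = μ^d be the product distribution on Q^d, and let D' be the distribution on Q^d obtained by first sampling x ~ μ^d, then choosing a uniformly random index i ∈ [d] and setting x_i = q*. Then the total variation distance between D and D' is at most sqrt((1 - μ(q*))/μ(q*)) · 1/sqrt(d). -/

import Mathlib

/-!
Planting `qs` at a uniform coordinate reweights `μ^d` by `K x / (d p)`, where `p = μ qs` and
`K x` counts the coordinates of `x` equal to `qs`. The distance is therefore `E |1 - K / (d p)|`
under `μ^d`, which Cauchy–Schwarz bounds by `√(Var K) / (d p)`; and `Var K = d p (1 - p)`, since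
`K` is a sum of `d` independent Bernoulli(`p`) indicators.
-/

open Finset

theorem sum_mul_abs_le_sqrt_sum_mul_sq {α : Type*} (s : Finset α) {w : α → ℝ} (f : α → ℝ)
    (hw : ∀ a, 0 ≤ w a) (hw1 : ∑ a ∈ s, w a = 1) :
    ∑ a ∈ s, w a * |f a| ≤ √(∑ a ∈ s, w a * f a ^ 2) := by
  have key := Real.sum_sqrt_mul_sqrt_le s hw fun a => mul_nonneg (hw a) (sq_nonneg (f a))
  rw [hw1, Real.sqrt_one, one_mul] at key
  refine le_of_eq_of_le (sum_congr rfl fun a _ => ?_) key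
  rw [Real.sqrt_mul (hw a), ← mul_assoc, Real.mul_self_sqrt (hw a), Real.sqrt_sq_eq_abs]

section ProductWeights

variable {Q ι : Type*} [Fintype Q] [Fintype ι] [DecidableEq ι] {μ : Q → ℝ}

theorem sum_prod_mul_prod (h : ι → Q → ℝ) :
    ∑ x : ι → Q, (∏ j, μ (x j)) * ∏ j, h j (x j) = ∏ j, ∑ q, μ q * h j q := by
  simp_rw [← prod_mul_distrib]
  exact (Fintype.prod_sum fun j q => μ q * h j q).symm

theorem sum_prod_eq_one (hμ1 : ∑ q, μ q = 1) : ∑ x : ι → Q, ∏ j, μ (x j) = 1 := by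
  simpa [hμ1] using sum_prod_mul_prod (ι := ι) (μ := μ) 1

theorem sum_prod_mul_apply (hμ1 : ∑ q, μ q = 1) (f : Q → ℝ) (i : ι) :
    ∑ x : ι → Q, (∏ j, μ (x j)) * f (x i) = ∑ q, μ q * f q := by
  simpa [ite_apply, mul_ite, hμ1] using
    sum_prod_mul_prod (μ := μ) fun j => if j = i then f else 1

theorem sum_prod_mul_apply_mul_apply (hμ1 : ∑ q, μ q = 1) (f g : Q → ℝ) {i i' : ι}
    (hii' : i ≠ i') :
    ∑ x : ι → Q, (∏ j, μ (x j)) * (f (x i) * g (x i')) =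
      (∑ q, μ q * f q) * ∑ q, μ q * g q := by
  have h := sum_prod_mul_prod (μ := μ) fun j => if j = i then f else if j = i' then g else 1
  rw [Fintype.prod_eq_mul i i' hii' fun j hj => by simp [hj.1, hj.2, hμ1]] at h
  simp only [if_neg hii'.symm, ite_true] at h
  convert h using 3 with x
  rw [Fintype.prod_eq_mul i i' hii' fun j hj => by simp [hj.1, hj.2]]
  simp [hii'.symm]

theorem sum_prod_mul_sum_sq (hμ1 : ∑ q, μ q = 1) (g : Q → ℝ) (hg : ∑ q, μ q * g q = 0) :
    ∑ x : ι → Q, (∏ j, μ (x j)) * (∑ i, g (x i)) ^ 2 =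
      Fintype.card ι * ∑ q, μ q * g q ^ 2 := by
  have cross (i i' : ι) : ∑ x : ι → Q, (∏ j, μ (x j)) * (g (x i) * g (x i')) =
      if i = i' then ∑ q, μ q * g q ^ 2 else 0 := by
    split_ifs with hii'
    · subst hii'
      simpa [← sq] using sum_prod_mul_apply hμ1 (fun q => g q ^ 2) i
    · rw [sum_prod_mul_apply_mul_apply hμ1 g g hii', hg, zero_mul]
  calc ∑ x : ι → Q, (∏ j, μ (x j)) * (∑ i, g (x i)) ^ 2
      = ∑ i, ∑ i', ∑ x : ι → Q, (∏ j, μ (x j)) * (g (x i) * g (x i')) := by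
        simp_rw [sq, sum_mul_sum, mul_sum]
        rw [sum_comm]
        exact sum_congr rfl fun i _ => sum_comm
    _ = Fintype.card ι * ∑ q, μ q * g q ^ 2 := by simp [cross]

end ProductWeights

section Indicator

variable {Q : Type*} [Fintype Q] [DecidableEq Q] {μ : Q → ℝ}

theorem sum_mul_single (qs : Q) : ∑ q, μ q * (Pi.single qs 1 : Q → ℝ) q = μ qs := by
  simp [Pi.single_apply]

theorem sum_mul_single_sub (hμ1 : ∑ q, μ q = 1) (qs : Q) :
    ∑ q, μ q * ((Pi.single qs 1 : Q → ℝ) q - μ qs) = 0 := by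
  simp only [mul_sub, sum_sub_distrib, ← sum_mul, sum_mul_single, hμ1, one_mul, sub_self]

theorem sum_mul_single_sub_sq (hμ1 : ∑ q, μ q = 1) (qs : Q) :
    ∑ q, μ q * ((Pi.single qs 1 : Q → ℝ) q - μ qs) ^ 2 = μ qs * (1 - μ qs) := by
  have hsq (q : Q) : ((Pi.single qs 1 : Q → ℝ) q - μ qs) ^ 2 =
      (Pi.single qs 1 : Q → ℝ) q * (1 - 2 * μ qs) + μ qs ^ 2 := by
    by_cases h : q = qs
    · simp [h]; ring
    · simp [h]
  simp only [hsq, mul_add, sum_add_distrib, ← mul_assoc, ← sum_mul, sum_mul_single, hμ1]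
  ring

end Indicator

theorem prod_sub_planted_eq {Q ι : Type*} [Fintype ι] [DecidableEq ι] [DecidableEq Q]
    {μ : Q → ℝ} (x : ι → Q) (qs : Q) (hqs : μ qs ≠ 0)
    (hι : (Fintype.card ι : ℝ) ≠ 0) :
    ∏ j, μ (x j) - 1 / (Fintype.card ι : ℝ) *
        ∑ i, (if x i = qs then ∏ j ∈ univ.erase i, μ (x j) else 0) =
      -((∏ j, μ (x j)) * ∑ i, ((Pi.single qs 1 : Q → ℝ) (x i) - μ qs)) /
        (Fintype.card ι * μ qs) := by
  have hterm (i : ι) : (if x i = qs then ∏ j ∈ univ.erase i, μ (x j) else 0) =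
      (Pi.single qs 1 : Q → ℝ) (x i) * (∏ j, μ (x j)) / μ qs := by
    split_ifs with h
    · rw [← mul_prod_erase univ (fun j => μ (x j)) (mem_univ i), h]
      field_simp
      simp
    · simp [h]
  simp only [hterm, ← sum_div, ← sum_mul, sum_sub_distrib, sum_const, card_univ]
  field_simp
  ring

/-- TV distance (paper convention, without the 1/2 factor) between the product
distribution `μ^d` and its planted version (a uniformly random coordinate set to `qs`)
is at most `sqrt((1-μ(qs))/μ(qs)) / sqrt d`. -/
theorem stmt_0 {Q : Type*} [Fintype Q] [DecidableEq Q] (d : ℕ) (hd : 0 < d)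
    (μ : Q → ℝ) (hμ : ∀ q, 0 ≤ μ q) (hsum : ∑ q, μ q = 1)
    (qs : Q) (hqs : 0 < μ qs) :
    ∑ x : Fin d → Q,
        |(∏ j, μ (x j)) -
          (1 / (d : ℝ)) * ∑ i : Fin d,
            (if x i = qs then ∏ j ∈ Finset.univ.erase i, μ (x j) else 0)| ≤
      Real.sqrt ((1 - μ qs) / μ qs) * (1 / Real.sqrt d) := by
  set p := μ qs
  set S : (Fin d → Q) → ℝ := fun x => ∑ i, ((Pi.single qs 1 : Q → ℝ) (x i) - p)
  have hd' : (d : ℝ) ≠ 0 := by positivity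
  have hprod (x : Fin d → Q) : 0 ≤ ∏ j, μ (x j) := prod_nonneg fun j _ => hμ (x j)
  have hpoint (x : Fin d → Q) : |(∏ j, μ (x j)) - (1 / (d : ℝ)) * ∑ i : Fin d,
      (if x i = qs then ∏ j ∈ Finset.univ.erase i, μ (x j) else 0)| =
        (∏ j, μ (x j)) * |S x / (d * p)| := by
    have hplanted := prod_sub_planted_eq x qs hqs.ne' (by simpa using hd')
    rw [Fintype.card_fin] at hplanted
    rw [hplanted, abs_div, abs_neg, abs_mul, abs_of_nonneg (hprod x), abs_div, mul_div_assoc]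
  have hvar : ∑ x : Fin d → Q, (∏ j, μ (x j)) * (S x / (d * p)) ^ 2 = (1 - p) / p / d := by
    simp_rw [div_pow, ← mul_div_assoc, ← sum_div]
    rw [sum_prod_mul_sum_sq hsum _ (sum_mul_single_sub hsum qs),
      sum_mul_single_sub_sq hsum qs, Fintype.card_fin]
    field_simp
    ring
  calc _ = ∑ x : Fin d → Q, (∏ j, μ (x j)) * |S x / (d * p)| :=
        sum_congr rfl fun x _ => hpoint x
    _ ≤ √((1 - p) / p / d) :=
      hvar ▸ sum_mul_abs_le_sqrt_sum_mul_sq _ _ hprod (sum_prod_eq_one hsum)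
    _ = √((1 - p) / p) * (1 / √d) := by
        rw [Real.sqrt_div' _ (Nat.cast_nonneg d), div_eq_mul_one_div]
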